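/- Let k ≥ 2, n : Fin k → ℝ with n_i > 0, fix y : Fin k, and let η : ℕ → (Fin k → ℝ) with φ̂_y(η_m) → 1 (balanced softmax of true class tends to 1). Let φ denote standard softmax. Then φ̂_y(η_m)/φ_y(η_m) → 1 as m → ∞. -/

import Mathlib

/-! The balanced softmax `φ̂(η)` is a probability vector, so `φ̂_y(η_m) → 1` forces every other
coordinate to `0`: the vectors `φ̂(η_m)` converge to the vertex `e_y` of the simplex. Since
`φ̂_y / φ_y = n_y Σ_i exp η_i / Σ_i n_i exp η_i = Σ_i (n_y / n_i) φ̂_i` is a fixed linear function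
of `φ̂`, it converges to its value `n_y / n_y = 1` at `e_y`. -/

open Real Finset Filter Topology

theorem tendsto_pi_single_of_tendsto_apply_one {ι α : Type*} [Fintype ι] [DecidableEq ι]
    {l : Filter α} {p : α → ι → ℝ} {y : ι} (hp : ∀ a i, 0 ≤ p a i)
    (hsum : ∀ a, ∑ i, p a i = 1) (hy : Tendsto (fun a => p a y) l (𝓝 1)) :
    Tendsto p l (𝓝 (Pi.single y 1)) := by
  refine tendsto_pi_nhds.2 fun i => ?_
  rcases eq_or_ne i y with rfl | hi
  · simpa using hy
  · rw [Pi.single_eq_of_ne hi]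
    have hrest : Tendsto (fun a => 1 - p a y) l (𝓝 0) := by simpa using hy.const_sub 1
    refine squeeze_zero (fun a => hp a i) (fun a => ?_) hrest
    have hpair := sum_le_sum_of_subset_of_nonneg (subset_univ {i, y}) fun j _ _ => hp a j
    rw [sum_pair hi, hsum] at hpair
    linarith

section BalancedSoftmax

variable {ι : Type*} [Fintype ι] {n : ι → ℝ}

noncomputable def balancedSoftmax (n η : ι → ℝ) (j : ι) : ℝ :=
  n j * exp (η j) / ∑ i, n i * exp (η i)

theorem balancedSoftmax_nonneg (hn : ∀ i, 0 ≤ n i) (η : ι → ℝ) (j : ι) :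
    0 ≤ balancedSoftmax n η j :=
  div_nonneg (mul_nonneg (hn j) (exp_pos _).le)
    (sum_nonneg fun i _ => mul_nonneg (hn i) (exp_pos _).le)

theorem sum_balancedSoftmax [Nonempty ι] (hn : ∀ i, 0 < n i) (η : ι → ℝ) :
    ∑ j, balancedSoftmax n η j = 1 := by
  have hS : 0 < ∑ i, n i * exp (η i) :=
    sum_pos (fun i _ => mul_pos (hn i) (exp_pos _)) univ_nonempty
  simp only [balancedSoftmax, ← sum_div, div_self hS.ne']

theorem balancedSoftmax_div_softmax (hn : ∀ i, 0 < n i) (η : ι → ℝ) (y : ι) :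
    balancedSoftmax n η y / (exp (η y) / ∑ i, exp (η i)) =
      ∑ i, n y / n i * balancedSoftmax n η i := by
  have hterm : ∀ i, n y / n i * balancedSoftmax n η i =
      n y * exp (η i) / ∑ j, n j * exp (η j) := fun i => by
    rw [balancedSoftmax]
    field_simp [(hn i).ne']
  rw [sum_congr rfl fun i _ => hterm i, ← sum_div, ← mul_sum, balancedSoftmax]
  field_simp [(exp_pos (η y)).ne']

end BalancedSoftmax

theorem positive_sample_ratio_limit_general (k : ℕ)
    (n : Fin k → ℝ) (hn : ∀ i, 0 < n i) (y : Fin k)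
    (η : ℕ → (Fin k → ℝ))
    (hconv : Tendsto (fun m => n y * Real.exp (η m y) / ∑ i, n i * Real.exp (η m i))
      atTop (nhds 1)) :
    Tendsto (fun m =>
        (n y * Real.exp (η m y) / ∑ i, n i * Real.exp (η m i)) /
        (Real.exp (η m y) / ∑ i, Real.exp (η m i)))
      atTop (nhds 1) := by
  have : Nonempty (Fin k) := ⟨y⟩
  have hvertex : Tendsto (fun m => balancedSoftmax n (η m)) atTop (𝓝 (Pi.single y 1)) :=
    tendsto_pi_single_of_tendsto_apply_one (fun m => balancedSoftmax_nonneg (fun i => (hn i).le) _)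
      (fun m => sum_balancedSoftmax hn _) hconv
  have hlinear : Continuous fun p : Fin k → ℝ => ∑ i, n y / n i * p i := by fun_prop
  have hlim := (hlinear.tendsto _).comp hvertex
  simp only [Pi.single_apply, mul_ite, mul_one, mul_zero, sum_ite_eq', mem_univ, if_true,
    div_self (hn y).ne'] at hlim
  exact hlim.congr fun m => (balancedSoftmax_div_softmax hn (η m) y).symm

theorem positive_sample_ratio_limit (k : ℕ) (hk : 2 ≤ k)
    (n : Fin k → ℝ) (hn : ∀ i, 0 < n i) (y : Fin k)
    (η : ℕ → (Fin k → ℝ))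
    (hconv : Tendsto (fun m => n y * Real.exp (η m y) / ∑ i, n i * Real.exp (η m i))
      atTop (nhds 1)) :
    Tendsto (fun m =>
        (n y * Real.exp (η m y) / ∑ i, n i * Real.exp (η m i)) /
        (Real.exp (η m y) / ∑ i, Real.exp (η m i)))
      atTop (nhds 1) :=
  positive_sample_ratio_limit_general k n hn y η hconv
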